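/- There is no function u : ℝ² → ℝ which is twice continuously differentiable on a neighborhood of the origin and satisfies all of the following: (i) ∂ₓu(0,0) = ∂ᵧu(0,0) = 0; (ii) ∂ₓₓu(0,0) + ∂ᵧᵧu(0,0) ≤ 0; (iii) for every vector (v₁,v₂) with v₁ > 0 and v₂ < 0, the Hessian of u at the origin is positive on it: ∂ₓₓu(0,0)·v₁² + 2·∂ₓ∂ᵧu(0,0)·v₁·v₂ + ∂ᵧᵧu(0,0)·v₂² > 0; (iv) there exist h : ℝ → ℝ differentiable near 0 with h(0) = 0 and h'(0) = 0, and η₁, η₂ : ℝ² → ℝ with x ↦ η₁(x,h(x)) and x ↦ η₂(x,h(x)) differentiable at 0, η₁(0,0) = 0, η₂(0,0) = 1, such that η₁(x,h(x))·∂ₓu(x,h(x)) + η₂(x,h(x))·∂ᵧu(x,h(x)) = u(x,h(x)) for all x in a neighborhood of 0. -/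

import Mathlib

/-!
Differentiate the identity `η₁ u_x + η₂ u_y = u` along the curve `x ↦ (x, h x)` at `0`.
Since `∇u(0) = 0`, `h'(0) = 0` and `(η₁, η₂) = (0, 1)` at the origin, the left side has
derivative `u_xy(0)` and the right side has derivative `0`, so `u_xy(0) = 0`. The Hessian,
evaluated on `(1, -1)`, then gives `u_xx(0) + u_yy(0) > 0`, contradicting `u_xx + u_yy ≤ 0`.
-/

open Topology

theorem HasDerivAt.mul_of_right_eq_zero {𝕜 𝔸 : Type*} [NontriviallyNormedField 𝕜]
    [NormedRing 𝔸] [NormedAlgebra 𝕜 𝔸] {c d : 𝕜 → 𝔸} {c' d' : 𝔸} {x : 𝕜}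
    (hc : HasDerivAt c c' x) (hd : HasDerivAt d d' x) (hdx : d x = 0) :
    HasDerivAt (fun y => c y * d y) (c x * d') x := by
  have hcd := hc.mul hd
  rw [hdx, mul_zero, zero_add] at hcd
  exact hcd

theorem HasFDerivAt.comp_hasDerivAt_graph {𝕜 E G : Type*} [NontriviallyNormedField 𝕜]
    [NormedAddCommGroup E] [NormedSpace 𝕜 E] [NormedAddCommGroup G] [NormedSpace 𝕜 G]
    {F : 𝕜 × E → G} {F' : 𝕜 × E →L[𝕜] G} {h : 𝕜 → E} {h' : E} {x : 𝕜}
    (hF : HasFDerivAt F F' (x, h x)) (hh : HasDerivAt h h' x) :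
    HasDerivAt (fun t => F (t, h t)) (F' (1, h')) x :=
  hF.comp_hasDerivAt x ((hasDerivAt_id x).prodMk hh)

theorem fderiv_fderiv_apply_eq_zero_of_conormal_identity {u : ℝ × ℝ → ℝ} {x₀ y₀ : ℝ}
    (hu : ContDiffAt ℝ 2 u (x₀, y₀)) (hux : fderiv ℝ u (x₀, y₀) (1, 0) = 0)
    (huy : fderiv ℝ u (x₀, y₀) (0, 1) = 0) {h : ℝ → ℝ} (hhx₀ : h x₀ = y₀)
    (hh : HasDerivAt h 0 x₀) {η₁ η₂ : ℝ → ℝ} (hη₁ : DifferentiableAt ℝ η₁ x₀)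
    (hη₂ : DifferentiableAt ℝ η₂ x₀) (hη₁x₀ : η₁ x₀ = 0) (hη₂x₀ : η₂ x₀ = 1)
    (hid : ∀ᶠ x in 𝓝 x₀,
      η₁ x * fderiv ℝ u (x, h x) (1, 0) + η₂ x * fderiv ℝ u (x, h x) (0, 1) = u (x, h x)) :
    fderiv ℝ (fun p => fderiv ℝ u p (0, 1)) (x₀, y₀) (1, 0) = 0 := by
  subst hhx₀
  have hDu : DifferentiableAt ℝ (fderiv ℝ u) (x₀, h x₀) :=
    (hu.fderiv_right (m := 1) le_rfl).differentiableAt one_ne_zero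
  have hpartial (v : ℝ × ℝ) : HasDerivAt (fun x => fderiv ℝ u (x, h x) v)
      (fderiv ℝ (fun p => fderiv ℝ u p v) (x₀, h x₀) (1, 0)) x₀ :=
    (hDu.clm_apply (differentiableAt_const v)).hasFDerivAt.comp_hasDerivAt_graph hh
  have hlhs := (hη₁.hasDerivAt.mul_of_right_eq_zero (hpartial (1, 0)) hux).add
    (hη₂.hasDerivAt.mul_of_right_eq_zero (hpartial (0, 1)) huy)
  have hrhs : HasDerivAt (fun x => u (x, h x)) 0 x₀ := by
    simpa [hux] using (hu.differentiableAt two_ne_zero).hasFDerivAt.comp_hasDerivAt_graph hh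
  simpa [hη₁x₀, hη₂x₀] using hlhs.unique (hrhs.congr_of_eventuallyEq hid)

/-- Analytic core of the maximum principle at a corner (Theorem A.1): there is no
`C²` function `u` near the origin with vanishing gradient at the origin, satisfying
the mean curvature inequality `u_xx + u_yy ≤ 0` at the origin, whose Hessian at the
origin is positive on all vectors `(v₁, v₂)` with `v₁ > 0`, `v₂ < 0`, and which
satisfies the orthogonality identity `η₁ u_x + η₂ u_y = u` along a curve
`x ↦ (x, h(x))` tangent to the x-axis at the origin. -/
theorem stmt_4 :
    ¬ ∃ u : ℝ × ℝ → ℝ,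
      ContDiffAt ℝ 2 u (0, 0) ∧
      fderiv ℝ u (0, 0) (1, 0) = 0 ∧
      fderiv ℝ u (0, 0) (0, 1) = 0 ∧
      fderiv ℝ (fun p => fderiv ℝ u p (1, 0)) (0, 0) (1, 0)
        + fderiv ℝ (fun p => fderiv ℝ u p (0, 1)) (0, 0) (0, 1) ≤ 0 ∧
      (∀ v₁ v₂ : ℝ, 0 < v₁ → v₂ < 0 →
        fderiv ℝ (fun p => fderiv ℝ u p (1, 0)) (0, 0) (1, 0) * v₁ ^ 2
          + 2 * fderiv ℝ (fun p => fderiv ℝ u p (0, 1)) (0, 0) (1, 0) * v₁ * v₂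
          + fderiv ℝ (fun p => fderiv ℝ u p (0, 1)) (0, 0) (0, 1) * v₂ ^ 2 > 0) ∧
      (∃ h : ℝ → ℝ, ∃ η₁ η₂ : ℝ × ℝ → ℝ,
        (∀ᶠ x in nhds (0 : ℝ), DifferentiableAt ℝ h x) ∧
        h 0 = 0 ∧ deriv h 0 = 0 ∧
        DifferentiableAt ℝ (fun x => η₁ (x, h x)) 0 ∧
        DifferentiableAt ℝ (fun x => η₂ (x, h x)) 0 ∧
        η₁ (0, 0) = 0 ∧ η₂ (0, 0) = 1 ∧
        ∀ᶠ x in nhds (0 : ℝ),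
          η₁ (x, h x) * fderiv ℝ u (x, h x) (1, 0)
            + η₂ (x, h x) * fderiv ℝ u (x, h x) (0, 1) = u (x, h x)) := by
  rintro ⟨u, hu, hux, huy, hΔ, hpos, h, η₁, η₂, hh, h0, hh', hη₁, hη₂, hη₁0, hη₂0, hid⟩
  have hmixed := fderiv_fderiv_apply_eq_zero_of_conormal_identity hu hux huy h0
    (hh.self_of_nhds.hasDerivAt.congr_deriv hh') hη₁ hη₂ (by simpa [h0]) (by simpa [h0]) hid
  have hdiag := hpos 1 (-1) one_pos neg_one_lt_zero
  rw [hmixed] at hdiag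
  linarith
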